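/- Given density operators ρ₁, ρ₂ on a space A and a density operator σ₁ on A ⊗ B with tr_B σ₁ = ρ₁, there exists a density operator σ₂ on A ⊗ B such that tr_B σ₂ = ρ₂ and F(ρ₁, ρ₂) = F(σ₁, σ₂). -/

import Mathlib

open Matrix Kronecker ComplexOrder
noncomputable section

/-- Hilbert–Schmidt inner product (real part): `⟨A,B⟩ = Re tr(Aᴴ B)`. -/
def ip {n : Type*} [Fintype n] (A B : Matrix n n ℂ) : ℝ := ((Aᴴ * B).trace).re

/-- density operator -/
def IsDensity {n : Type*} [Fintype n] [DecidableEq n] (ρ : Matrix n n ℂ) : Prop :=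
  ρ.PosSemidef ∧ ρ.trace = 1

/-- the square root `Matrix.PosSemidef.sqrt` of the older Mathlib, spelled out -/
def posSemidefSqrt {n : Type*} [Fintype n] [DecidableEq n] {A : Matrix n n ℂ}
    (hA : A.PosSemidef) : Matrix n n ℂ :=
  (hA.1.eigenvectorUnitary : Matrix n n ℂ) * diagonal ((↑) ∘ (√·) ∘ hA.1.eigenvalues) *
    (star (hA.1.eigenvectorUnitary : Matrix n n ℂ))

/-- trace norm `‖A‖₁ = tr √(AᴴA)` -/
def traceNorm {n : Type*} [Fintype n] [DecidableEq n] (A : Matrix n n ℂ) : ℝ :=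
  (posSemidefSqrt (Matrix.posSemidef_conjTranspose_mul_self A)).trace.re

open Classical in
/-- square root of a positive semidefinite matrix (junk value `0` otherwise) -/
def msqrt {n : Type*} [Fintype n] [DecidableEq n] (A : Matrix n n ℂ) : Matrix n n ℂ :=
  if h : A.PosSemidef then posSemidefSqrt h else 0

/-- fidelity `F(P,Q) = ‖√P √Q‖₁` -/
def fidelity {n : Type*} [Fintype n] [DecidableEq n] (P Q : Matrix n n ℂ) : ℝ :=
  traceNorm (msqrt P * msqrt Q)

/-- partial trace over the second tensor factor -/
def ptraceRight {n m : Type*} [Fintype m] (M : Matrix (n × m) (n × m) ℂ) :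
    Matrix n n ℂ := Matrix.of fun i j => ∑ k, M (i, k) (j, k)

/-- partial trace over the first tensor factor -/
def ptraceLeft {n m : Type*} [Fintype n] (M : Matrix (n × m) (n × m) ℂ) :
    Matrix m m ℂ := Matrix.of fun i j => ∑ k, M (k, i) (k, j)

/-- `0 ≤ Π ≤ I` -/
def Meas {n : Type*} [Fintype n] [DecidableEq n] (P : Matrix n n ℂ) : Prop :=
  P.PosSemidef ∧ (1 - P).PosSemidef

/-!
Write `√ρ₁ √ρ₂ = U |√ρ₁ √ρ₂|` (polar decomposition) and `X = √ρ₂ U* (√ρ₁)⁺` with the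
Moore–Penrose pseudo-inverse. Then `X ρ₁ X* ≤ ρ₂` and `Re tr (X ρ₁) = tr |√ρ₁ √ρ₂| = F(ρ₁, ρ₂)`.
For any state `τ` on `B`, `σ₂ = Y σ₁ Y* + (ρ₂ - X ρ₁ X*) ⊗ τ` with `Y = X ⊗ 1` is a state with
marginal `ρ₂`. As `Y σ₁ Y* ≤ σ₂`, operator monotonicity of the square root gives
`F(σ₁, σ₂) ≥ tr √(√σ₁ Y σ₁ Y* √σ₁) ≥ Re tr (Y σ₁) = Re tr (X ρ₁) = F(ρ₁, ρ₂)`.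
The reverse inequality is monotonicity of the fidelity under the partial trace: with
`√σ₁ √σ₂ = V |√σ₁ √σ₂|`, the partial trace of `√σ₂ V* √σ₁` obeys a Cauchy–Schwarz bound which
factors it as `√ρ₂ C √ρ₁` with `C` a contraction.
-/

open scoped MatrixOrder

namespace Matrix

section Order

variable {n : Type*} [Fintype n]

lemma re_trace_le_re_trace {A B : Matrix n n ℂ} (h : A ≤ B) : A.trace.re ≤ B.trace.re := by
  have := (Complex.le_def.mp (le_iff.mp h).trace_nonneg).1
  rw [trace_sub, Complex.sub_re, Complex.zero_re] at this
  linarith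

lemma norm_star_dotProduct_sq_le (x y : n → ℂ) :
    ‖star x ⬝ᵥ y‖ ^ 2 ≤ (star x ⬝ᵥ x).re * (star y ⬝ᵥ y).re := by
  have h := inner_mul_inner_self_le (𝕜 := ℂ) (WithLp.toLp 2 x) (WithLp.toLp 2 y)
  simp only [EuclideanSpace.inner_eq_star_dotProduct, RCLike.re_to_complex] at h
  have e : ‖y ⬝ᵥ star x‖ = ‖x ⬝ᵥ star y‖ := by
    rw [← Complex.norm_conj, ← Complex.star_def, ← star_dotProduct_star, star_star,
      dotProduct_comm]
  rw [e, ← sq] at h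
  rwa [dotProduct_comm (star x) y, dotProduct_comm (star x) x, dotProduct_comm (star y) y, e]

lemma norm_sum_star_dotProduct_sq_le {κ : Type*} [Fintype κ] (x y : κ → n → ℂ) :
    ‖∑ k, star (x k) ⬝ᵥ y k‖ ^ 2 ≤
      (∑ k, (star (x k) ⬝ᵥ x k).re) * ∑ k, (star (y k) ⬝ᵥ y k).re := by
  have h := norm_star_dotProduct_sq_le (fun p : κ × n => x p.1 p.2) (fun p => y p.1 p.2)
  simpa only [dotProduct, Fintype.sum_prod_type, Pi.star_apply, Complex.re_sum] using h

lemma star_mulVec_dotProduct_mulVec {m : Type*} [Fintype m] (K L : Matrix m n ℂ)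
    (u w : n → ℂ) : star (K *ᵥ u) ⬝ᵥ (L *ᵥ w) = star u ⬝ᵥ (Kᴴ * L) *ᵥ w := by
  rw [star_mulVec, dotProduct_mulVec, vecMul_vecMul, ← dotProduct_mulVec]

lemma re_dotProduct_le_of_le {A B : Matrix n n ℂ} (h : A ≤ B) (v : n → ℂ) :
    (star v ⬝ᵥ A *ᵥ v).re ≤ (star v ⬝ᵥ B *ᵥ v).re := by
  have := (le_iff.mp h).re_dotProduct_nonneg v
  rw [sub_mulVec, dotProduct_sub] at this
  simp only [RCLike.re_to_complex, Complex.sub_re] at this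
  linarith

lemma le_of_re_dotProduct_le {A B : Matrix n n ℂ} (hA : A.IsHermitian) (hB : B.IsHermitian)
    (h : ∀ v, (star v ⬝ᵥ A *ᵥ v).re ≤ (star v ⬝ᵥ B *ᵥ v).re) : A ≤ B := by
  refine le_iff.mpr (PosSemidef.of_dotProduct_mulVec_nonneg (hB.sub hA) fun v => ?_)
  rw [Complex.nonneg_iff, sub_mulVec, dotProduct_sub, Complex.sub_re, Complex.sub_im]
  have hAi := hA.im_star_dotProduct_mulVec_self v
  have hBi := hB.im_star_dotProduct_mulVec_self v
  simp only [RCLike.im_to_complex] at hAi hBi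
  exact ⟨by linarith [h v], by rw [hAi, hBi, sub_zero]⟩

variable [DecidableEq n]

lemma eq_zero_of_star_dotProduct_mulVec_eq_zero {M : Matrix n n ℂ}
    (h : ∀ a b, star a ⬝ᵥ M *ᵥ b = 0) : M = 0 := by
  ext i j
  simpa [mulVec_single, Pi.single_apply] using h (Pi.single i 1) (Pi.single j 1)

open scoped Matrix.Norms.L2Operator in
lemma sqrt_le_sqrt {A B : Matrix n n ℂ} (h : A ≤ B) : CFC.sqrt A ≤ CFC.sqrt B :=
  CFC.sqrt_le_sqrt A B h

end Order

section Contraction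

variable {n : Type*} [Fintype n] [DecidableEq n]

lemma conjTranspose_mul_le_one_of_norm_sq_le {C : Matrix n n ℂ}
    (h : ∀ a b : n → ℂ, ‖star a ⬝ᵥ C *ᵥ b‖ ^ 2 ≤ (star a ⬝ᵥ a).re * (star b ⬝ᵥ b).re) :
    Cᴴ * C ≤ 1 := by
  refine le_of_re_dotProduct_le (isHermitian_conjTranspose_mul_self C) isHermitian_one
    fun b => ?_
  rw [one_mulVec, ← star_mulVec_dotProduct_mulVec]
  have hc : ‖star (C *ᵥ b) ⬝ᵥ (C *ᵥ b)‖ = (star (C *ᵥ b) ⬝ᵥ (C *ᵥ b)).re :=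
    (Complex.re_eq_norm.mpr (dotProduct_star_self_nonneg _)).symm
  have hb : 0 ≤ (star b ⬝ᵥ b).re := (Complex.nonneg_iff.mp (dotProduct_star_self_nonneg b)).1
  have hcb := h (C *ᵥ b) b
  rw [hc] at hcb
  nlinarith [norm_nonneg (star (C *ᵥ b) ⬝ᵥ (C *ᵥ b))]

lemma re_trace_mul_le_re_trace {K P : Matrix n n ℂ} (hK : Kᴴ * K ≤ 1) (hP : P.PosSemidef) :
    (K * P).trace.re ≤ P.trace.re := by
  have hsum : K + Kᴴ ≤ 2 := by
    have h0 := (posSemidef_conjTranspose_mul_self (1 - K)).nonneg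
    have e : (1 - K)ᴴ * (1 - K) = 1 + Kᴴ * K - (K + Kᴴ) := by
      simp only [conjTranspose_sub, conjTranspose_one, sub_mul, mul_sub, one_mul, mul_one]
      abel
    rw [e, sub_nonneg] at h0
    calc K + Kᴴ ≤ 1 + Kᴴ * K := h0
      _ ≤ 1 + 1 := add_le_add_right hK 1
      _ = 2 := one_add_one_eq_two
  set S := CFC.sqrt P
  have hS : IsSelfAdjoint S := IsSelfAdjoint.of_nonneg (CFC.sqrt_nonneg P)
  have hSS : S * S = P := CFC.sqrt_mul_sqrt_self P hP.nonneg
  have hSKS : (S * K * S).trace = (K * P).trace := by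
    rw [mul_assoc, trace_mul_comm, mul_assoc, hSS]
  have hSKS' : (S * Kᴴ * S).trace = star (K * P).trace := by
    have hSh : Sᴴ = S := hS
    rw [← hSKS, ← trace_conjTranspose, conjTranspose_mul, conjTranspose_mul, hSh, mul_assoc]
  have h := re_trace_le_re_trace (hS.conjugate_le_conjugate hsum)
  rw [mul_add, add_mul, trace_add, hSKS, hSKS', Complex.add_re, Complex.star_def,
    Complex.conj_re] at h
  have h2 : (S * 2 * S).trace.re = 2 * P.trace.re := by
    rw [mul_two, add_mul, hSS, trace_add, Complex.add_re, two_mul]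
  linarith

open scoped Matrix.Norms.L2Operator in
lemma mul_conjTranspose_le_one {U : Matrix n n ℂ} (h : Uᴴ * U ≤ 1) : U * Uᴴ ≤ 1 := by
  rw [← CStarAlgebra.norm_le_one_iff_of_nonneg _ (posSemidef_self_mul_conjTranspose U).nonneg]
  rw [← CStarAlgebra.norm_le_one_iff_of_nonneg _ (posSemidef_conjTranspose_mul_self U).nonneg] at h
  rw [← star_eq_conjTranspose] at h ⊢
  rwa [CStarRing.norm_self_mul_star, ← CStarRing.norm_star_mul_self]

end Contraction

section PseudoInverse

variable {n : Type*} [Fintype n] [DecidableEq n]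

lemma cfc_mul_cfc (B : Matrix n n ℂ) (f g : ℝ → ℝ) :
    cfc f B * cfc g B = cfc (fun x => f x * g x) B :=
  (cfc_mul f g B (B.finite_real_spectrum.continuousOn f)
    (B.finite_real_spectrum.continuousOn g)).symm

/-- The Moore–Penrose pseudo-inverse of a Hermitian matrix: `x ↦ x⁻¹` applied spectrally, which
inverts on the support only because `0⁻¹ = 0` in `ℝ`. -/
def hermitianPinv (B : Matrix n n ℂ) : Matrix n n ℂ := cfc (·⁻¹ : ℝ → ℝ) B

lemma isHermitian_hermitianPinv (B : Matrix n n ℂ) : (hermitianPinv B).IsHermitian :=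
  cfc_predicate _ B

variable {B : Matrix n n ℂ} (hB : B.IsHermitian)
include hB

lemma hermitianPinv_mul_comm : hermitianPinv B * B = B * hermitianPinv B := by
  have h := cfc_commute_cfc (fun x : ℝ => x⁻¹) (fun x => x) B
  rwa [cfc_id' ℝ B hB.isSelfAdjoint] at h

lemma mul_hermitianPinv_mul_self : B * hermitianPinv B * B = B := by
  have hid := cfc_id' ℝ B hB.isSelfAdjoint
  calc B * hermitianPinv B * B
      = cfc (fun x : ℝ => x) B * cfc (·⁻¹ : ℝ → ℝ) B * cfc (fun x : ℝ => x) B := by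
        rw [hid]; rfl
    _ = cfc (fun x : ℝ => x * x⁻¹ * x) B := by rw [cfc_mul_cfc, cfc_mul_cfc]
    _ = B := (cfc_congr fun x _ => mul_inv_mul_cancel x).trans hid

lemma mul_hermitianPinv_le_one : B * hermitianPinv B ≤ 1 := by
  have hid := cfc_id' ℝ B hB.isSelfAdjoint
  calc B * hermitianPinv B = cfc (fun x : ℝ => x) B * cfc (·⁻¹ : ℝ → ℝ) B := by rw [hid]; rfl
    _ = cfc (fun x : ℝ => x * x⁻¹) B := cfc_mul_cfc _ _ _
    _ ≤ 1 := cfc_le_one _ B fun x _ => by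
      rcases eq_or_ne x 0 with rfl | hx
      · simp
      · simp [hx]

lemma hermitianPinv_mul_sq_mul_hermitianPinv_le_one :
    hermitianPinv B * (B * B) * hermitianPinv B ≤ 1 := by
  calc hermitianPinv B * (B * B) * hermitianPinv B
      = B * hermitianPinv B * B * hermitianPinv B := by
        rw [← mul_assoc, hermitianPinv_mul_comm hB]
    _ ≤ 1 := by rw [mul_hermitianPinv_mul_self hB]; exact mul_hermitianPinv_le_one hB

lemma re_dotProduct_hermitianPinv_mulVec_le (v : n → ℂ) :
    (star (hermitianPinv B *ᵥ v) ⬝ᵥ (B * B) *ᵥ hermitianPinv B *ᵥ v).re ≤ (star v ⬝ᵥ v).re := by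
  calc _ = (star v ⬝ᵥ (hermitianPinv B * (B * B) * hermitianPinv B) *ᵥ v).re := by
        rw [mulVec_mulVec, star_mulVec_dotProduct_mulVec, (isHermitian_hermitianPinv B).eq,
          ← mul_assoc]
    _ ≤ (star v ⬝ᵥ (1 : Matrix n n ℂ) *ᵥ v).re :=
        re_dotProduct_le_of_le (hermitianPinv_mul_sq_mul_hermitianPinv_le_one hB) v
    _ = (star v ⬝ᵥ v).re := by rw [one_mulVec]

end PseudoInverse

variable {n : Type*} [Fintype n] [DecidableEq n]

theorem exists_polar (T : Matrix n n ℂ) :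
    ∃ U : Matrix n n ℂ, T = U * CFC.abs T ∧ Uᴴ * T = CFC.abs T ∧ Uᴴ * U ≤ 1 ∧ U * Uᴴ ≤ 1 := by
  set R := CFC.abs T
  have hR : R.IsHermitian := (CFC.abs_nonneg T).posSemidef.1
  have hRR : R * R = Tᴴ * T := CFC.abs_mul_abs T
  set R' := hermitianPinv R
  have hR' : R'ᴴ = R' := isHermitian_hermitianPinv R
  have hcomm : R' * R = R * R' := hermitianPinv_mul_comm hR
  have hRR'R : R * R' * R = R := mul_hermitianPinv_mul_self hR
  -- `R' * R` projects onto the support of `R`, whose complement is the kernel of `T`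
  have hT : T * (R' * R) = T := by
    have h0 : R * (1 - R' * R) = 0 := by rw [mul_sub, mul_one, ← mul_assoc, hRR'R, sub_self]
    have h1 : (T * (1 - R' * R))ᴴ * (T * (1 - R' * R)) = 0 := by
      rw [conjTranspose_mul, mul_assoc, ← mul_assoc Tᴴ, ← hRR, mul_assoc, h0, mul_zero,
        mul_zero]
    rw [conjTranspose_mul_self_eq_zero, mul_sub, mul_one, sub_eq_zero] at h1
    exact h1.symm
  have hUU : (T * R')ᴴ * (T * R') = R * R' := by
    calc (T * R')ᴴ * (T * R') = R' * (R * R) * R' := by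
          rw [conjTranspose_mul, hR', hRR]; simp only [mul_assoc]
      _ = R * R' * R * R' := by rw [← mul_assoc, hcomm]
      _ = R * R' := by rw [hRR'R]
  refine ⟨T * R', by rw [mul_assoc, hT], ?_, ?_, mul_conjTranspose_le_one ?_⟩
  · rw [conjTranspose_mul, hR', mul_assoc, ← hRR, ← mul_assoc, hcomm, hRR'R]
  all_goals rw [hUU]; exact mul_hermitianPinv_le_one hR

section CauchySchwarz

variable {G Q R : Matrix n n ℂ}
  (hG : ∀ a b, ‖star a ⬝ᵥ G *ᵥ b‖ ^ 2 ≤ (star a ⬝ᵥ Q *ᵥ a).re * (star b ⬝ᵥ R *ᵥ b).re)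
include hG

lemma conjTranspose_mul_eq_zero_of_norm_sq_le {K : Matrix n n ℂ} (hK : Q * K = 0) :
    Kᴴ * G = 0 := by
  refine eq_zero_of_star_dotProduct_mulVec_eq_zero fun a b => ?_
  have h := hG (K *ᵥ a) b
  rw [mulVec_mulVec, hK, zero_mulVec, dotProduct_zero, Complex.zero_re, zero_mul] at h
  rw [← star_mulVec_dotProduct_mulVec]
  exact norm_eq_zero.mp (pow_eq_zero_iff two_ne_zero |>.mp (le_antisymm h (by positivity)))

lemma mul_eq_zero_of_norm_sq_le {K : Matrix n n ℂ} (hK : R * K = 0) : G * K = 0 := by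
  refine eq_zero_of_star_dotProduct_mulVec_eq_zero fun a b => ?_
  have h := hG a (K *ᵥ b)
  rw [mulVec_mulVec, mulVec_mulVec, hK, zero_mulVec, dotProduct_zero, Complex.zero_re,
    mul_zero] at h
  exact norm_eq_zero.mp (pow_eq_zero_iff two_ne_zero |>.mp (le_antisymm h (by positivity)))

end CauchySchwarz

end Matrix

section TraceNorm

variable {n : Type*} [Fintype n] [DecidableEq n]

lemma posSemidefSqrt_eq_sqrt {A : Matrix n n ℂ} (hA : A.PosSemidef) :
    posSemidefSqrt hA = CFC.sqrt A := by
  rw [CFC.sqrt_eq_cfc, cfc_nnreal_eq_real _ A, hA.1.cfc_eq]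
  simp only [IsHermitian.cfc, posSemidefSqrt, Real.coe_sqrt, Real.coe_toNNReal']
  rw [Unitary.conjStarAlgAut_apply]
  congr 3
  funext i
  simp [max_eq_left (hA.eigenvalues_nonneg i)]

lemma msqrt_eq_sqrt {A : Matrix n n ℂ} (hA : A.PosSemidef) : msqrt A = CFC.sqrt A := by
  rw [msqrt, dif_pos hA, posSemidefSqrt_eq_sqrt]

lemma isHermitian_msqrt (A : Matrix n n ℂ) : (msqrt A).IsHermitian := by
  by_cases hA : A.PosSemidef
  · rw [msqrt_eq_sqrt hA]
    exact (CFC.sqrt_nonneg A).posSemidef.1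
  · rw [msqrt, dif_neg hA]
    exact isHermitian_zero

lemma traceNorm_eq_re_trace_abs (T : Matrix n n ℂ) : traceNorm T = (CFC.abs T).trace.re := by
  rw [traceNorm, posSemidefSqrt_eq_sqrt]
  rfl

lemma fidelity_eq_traceNorm {P Q : Matrix n n ℂ} (hP : P.PosSemidef) (hQ : Q.PosSemidef) :
    fidelity P Q = traceNorm (CFC.sqrt P * CFC.sqrt Q) := by
  rw [fidelity, msqrt_eq_sqrt hP, msqrt_eq_sqrt hQ]

lemma re_trace_mul_le_traceNorm {K : Matrix n n ℂ} (hK : Kᴴ * K ≤ 1) (M : Matrix n n ℂ) :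
    (K * M).trace.re ≤ traceNorm M := by
  obtain ⟨U, hM, -, hU, -⟩ := exists_polar M
  rw [traceNorm_eq_re_trace_abs]
  conv_lhs => rw [hM, ← mul_assoc]
  refine re_trace_mul_le_re_trace ?_ (CFC.abs_nonneg M).posSemidef
  calc (K * U)ᴴ * (K * U) = star U * (Kᴴ * K) * U := by
        rw [conjTranspose_mul, star_eq_conjTranspose]; simp only [mul_assoc]
    _ ≤ star U * 1 * U := star_left_conjugate_le_conjugate hK U
    _ ≤ 1 := by rwa [mul_one]

lemma re_trace_le_traceNorm (M : Matrix n n ℂ) : M.trace.re ≤ traceNorm M := by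
  simpa using re_trace_mul_le_traceNorm (K := 1) (by simp) M

lemma traceNorm_conjTranspose (T : Matrix n n ℂ) : traceNorm Tᴴ = traceNorm T := by
  obtain ⟨U, hT, hUT, -, -⟩ := exists_polar T
  have hR := (CFC.abs_nonneg T).posSemidef
  set R := CFC.abs T
  have habs : CFC.abs Tᴴ = U * R * Uᴴ := by
    refine CFC.sqrt_unique ?_ (hR.mul_mul_conjTranspose_same U).nonneg
    calc U * R * Uᴴ * (U * R * Uᴴ) = U * R * (Uᴴ * (U * R)) * Uᴴ := by simp only [mul_assoc]
      _ = T * Tᴴ := by rw [← hT, hUT, hT, conjTranspose_mul, hR.1.eq]; simp only [mul_assoc]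
      _ = star Tᴴ * Tᴴ := by rw [star_eq_conjTranspose, conjTranspose_conjTranspose]
  rw [traceNorm_eq_re_trace_abs, traceNorm_eq_re_trace_abs, habs, trace_mul_comm, ← hT, hUT]

lemma fidelity_comm (P Q : Matrix n n ℂ) : fidelity P Q = fidelity Q P := by
  rw [fidelity, fidelity, ← traceNorm_conjTranspose (msqrt Q * msqrt P), conjTranspose_mul,
    (isHermitian_msqrt P).eq, (isHermitian_msqrt Q).eq]

/-- The Cauchy–Schwarz bound factors `G = √Q C √R` through a contraction `C`. -/
theorem re_trace_le_fidelity_of_norm_sq_le {G Q R : Matrix n n ℂ}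
    (hG : ∀ a b, ‖star a ⬝ᵥ G *ᵥ b‖ ^ 2 ≤ (star a ⬝ᵥ Q *ᵥ a).re * (star b ⬝ᵥ R *ᵥ b).re)
    (hQ : Q.PosSemidef) (hR : R.PosSemidef) : G.trace.re ≤ fidelity R Q := by
  set BQ := CFC.sqrt Q
  set BR := CFC.sqrt R
  have hBQ : BQ.IsHermitian := (CFC.sqrt_nonneg Q).posSemidef.1
  have hBR : BR.IsHermitian := (CFC.sqrt_nonneg R).posSemidef.1
  have hBQQ : BQ * BQ = Q := CFC.sqrt_mul_sqrt_self Q hQ.nonneg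
  have hBRR : BR * BR = R := CFC.sqrt_mul_sqrt_self R hR.nonneg
  set C := hermitianPinv BQ * G * hermitianPinv BR
  have hGC : G = BQ * C * BR := by
    have hleft : (1 - hermitianPinv BQ * BQ)ᴴ * G = 0 := by
      refine conjTranspose_mul_eq_zero_of_norm_sq_le hG ?_
      rw [← hBQQ, mul_assoc, mul_sub, mul_one, ← mul_assoc BQ, mul_hermitianPinv_mul_self hBQ,
        sub_self, mul_zero]
    have hright : G * (1 - hermitianPinv BR * BR) = 0 := by
      refine mul_eq_zero_of_norm_sq_le hG ?_
      rw [← hBRR, mul_assoc, mul_sub, mul_one, ← mul_assoc BR, mul_hermitianPinv_mul_self hBR,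
        sub_self, mul_zero]
    rw [conjTranspose_sub, conjTranspose_one, conjTranspose_mul, hBQ.eq,
      (isHermitian_hermitianPinv BQ).eq, sub_mul, one_mul, sub_eq_zero] at hleft
    rw [mul_sub, mul_one, sub_eq_zero] at hright
    simp only [C, ← mul_assoc]
    rw [← hleft, mul_assoc, ← hright]
  have hC : Cᴴ * C ≤ 1 := by
    refine conjTranspose_mul_le_one_of_norm_sq_le fun a b => ?_
    have h := hG (hermitianPinv BQ *ᵥ a) (hermitianPinv BR *ᵥ b)
    rw [mulVec_mulVec, star_mulVec_dotProduct_mulVec, (isHermitian_hermitianPinv BQ).eq,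
      ← mul_assoc] at h
    refine h.trans (mul_le_mul ?_ ?_ (hR.re_dotProduct_nonneg _) ?_)
    · exact hBQQ ▸ re_dotProduct_hermitianPinv_mulVec_le hBQ a
    · exact hBRR ▸ re_dotProduct_hermitianPinv_mulVec_le hBR b
    · exact (Complex.nonneg_iff.mp (dotProduct_star_self_nonneg a)).1
  rw [fidelity_eq_traceNorm hR hQ, hGC, mul_assoc, trace_mul_comm, mul_assoc]
  exact re_trace_mul_le_traceNorm hC _

end TraceNorm
section PartialTrace

variable {n m : Type*} [Fintype m]

lemma ptraceRight_eq_sum_submatrix (Z : Matrix (n × m) (n × m) ℂ) :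
    ptraceRight Z = ∑ k, Z.submatrix (·, k) (·, k) := by
  ext i j
  simp [ptraceRight, Matrix.sum_apply]

lemma trace_ptraceRight [Fintype n] (Z : Matrix (n × m) (n × m) ℂ) :
    (ptraceRight Z).trace = Z.trace := by
  simp [ptraceRight, trace, Fintype.sum_prod_type]

lemma Matrix.PosSemidef.ptraceRight {Z : Matrix (n × m) (n × m) ℂ} (hZ : Z.PosSemidef) :
    (ptraceRight Z).PosSemidef := by
  rw [ptraceRight_eq_sum_submatrix]
  exact posSemidef_sum _ fun k _ => hZ.submatrix _

lemma ptraceRight_add (Y Z : Matrix (n × m) (n × m) ℂ) :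
    ptraceRight (Y + Z) = ptraceRight Y + ptraceRight Z := by
  ext i j
  simp [ptraceRight, Finset.sum_add_distrib]

lemma ptraceRight_sub (Y Z : Matrix (n × m) (n × m) ℂ) :
    ptraceRight (Y - Z) = ptraceRight Y - ptraceRight Z := by
  ext i j
  simp [ptraceRight, Finset.sum_sub_distrib]

lemma ptraceRight_mono {Y Z : Matrix (n × m) (n × m) ℂ} (h : Y ≤ Z) :
    ptraceRight Y ≤ ptraceRight Z := by
  rw [le_iff, ← ptraceRight_sub]
  exact (le_iff.mp h).ptraceRight

lemma ptraceRight_kronecker (X : Matrix n n ℂ) (τ : Matrix m m ℂ) :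
    ptraceRight (X ⊗ₖ τ) = τ.trace • X := by
  ext i j
  simp only [ptraceRight, of_apply, kroneckerMap_apply, Matrix.smul_apply, smul_eq_mul, trace,
    diag, Finset.sum_mul]
  exact Finset.sum_congr rfl fun k _ => mul_comm _ _

variable [Fintype n]

lemma star_dotProduct_ptraceRight_mulVec {l : Type*} [Fintype l] (F₁ F₂ : Matrix l (n × m) ℂ)
    (a b : n → ℂ) :
    star a ⬝ᵥ ptraceRight (F₁ᴴ * F₂) *ᵥ b =
      ∑ k, star (F₁.submatrix id (·, k) *ᵥ a) ⬝ᵥ (F₂.submatrix id (·, k) *ᵥ b) := by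
  simp only [ptraceRight_eq_sum_submatrix, sum_mulVec, dotProduct_sum,
    star_mulVec_dotProduct_mulVec, conjTranspose_submatrix,
    submatrix_mul _ _ _ _ _ Function.bijective_id]

lemma norm_star_dotProduct_ptraceRight_mulVec_sq_le {l : Type*} [Fintype l]
    (F₁ F₂ : Matrix l (n × m) ℂ) (a b : n → ℂ) :
    ‖star a ⬝ᵥ ptraceRight (F₁ᴴ * F₂) *ᵥ b‖ ^ 2 ≤
      (star a ⬝ᵥ ptraceRight (F₁ᴴ * F₁) *ᵥ a).re * (star b ⬝ᵥ ptraceRight (F₂ᴴ * F₂) *ᵥ b).re := by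
  simp only [star_dotProduct_ptraceRight_mulVec, Complex.re_sum]
  exact norm_sum_star_dotProduct_sq_le _ _

variable [DecidableEq m]

lemma ptraceRight_kronecker_one_mul (X : Matrix n n ℂ) (Z : Matrix (n × m) (n × m) ℂ) :
    ptraceRight ((X ⊗ₖ (1 : Matrix m m ℂ)) * Z) = X * ptraceRight Z := by
  ext i j
  simp [ptraceRight, mul_apply, Fintype.sum_prod_type, one_apply, Finset.mul_sum]
  exact Finset.sum_comm

lemma ptraceRight_mul_kronecker_one (X : Matrix n n ℂ) (Z : Matrix (n × m) (n × m) ℂ) :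
    ptraceRight (Z * (X ⊗ₖ (1 : Matrix m m ℂ))) = ptraceRight Z * X := by
  ext i j
  simp [ptraceRight, mul_apply, Fintype.sum_prod_type, one_apply, Finset.sum_mul]
  exact Finset.sum_comm

end PartialTrace

section Fidelity

variable {n : Type*} [Fintype n] [DecidableEq n]

theorem re_trace_mul_le_fidelity {σ₁ σ₂ Y : Matrix n n ℂ} (hσ₁ : σ₁.PosSemidef)
    (hY : Y * σ₁ * Yᴴ ≤ σ₂) : (Y * σ₁).trace.re ≤ fidelity σ₁ σ₂ := by
  have hσ₂ : σ₂.PosSemidef :=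
    ((hσ₁.mul_mul_conjTranspose_same Y).nonneg.trans hY).posSemidef
  rw [fidelity_comm, fidelity_eq_traceNorm hσ₂ hσ₁, traceNorm_eq_re_trace_abs, CFC.abs]
  have hS₁ : IsSelfAdjoint (CFC.sqrt σ₁) := IsSelfAdjoint.of_nonneg (CFC.sqrt_nonneg σ₁)
  have hS₂ : IsSelfAdjoint (CFC.sqrt σ₂) := IsSelfAdjoint.of_nonneg (CFC.sqrt_nonneg σ₂)
  have hS₁S₁ := CFC.sqrt_mul_sqrt_self σ₁ hσ₁.nonneg
  have hS₂S₂ := CFC.sqrt_mul_sqrt_self σ₂ hσ₂.nonneg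
  generalize CFC.sqrt σ₁ = S₁ at *
  generalize CFC.sqrt σ₂ = S₂ at *
  subst hS₁S₁ hS₂S₂
  set M := S₁ * Y * S₁
  have hMM : M * Mᴴ ≤ S₁ * (S₂ * S₂) * S₁ := by
    convert hS₁.conjugate_le_conjugate hY using 1
    simp only [M, ← star_eq_conjTranspose, star_mul, hS₁.star_eq, mul_assoc]
  calc (Y * (S₁ * S₁)).trace.re = (S₁ * Y * S₁).trace.re := by
        rw [trace_mul_comm Y, trace_mul_cycle S₁ Y S₁]
    _ ≤ traceNorm M := re_trace_le_traceNorm M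
    _ = (CFC.sqrt (M * Mᴴ)).trace.re := by
        rw [← traceNorm_conjTranspose, traceNorm_eq_re_trace_abs, CFC.abs, star_eq_conjTranspose,
          conjTranspose_conjTranspose]
    _ ≤ (CFC.sqrt (S₁ * (S₂ * S₂) * S₁)).trace.re := re_trace_le_re_trace (sqrt_le_sqrt hMM)
    _ = (CFC.sqrt (star (S₂ * S₁) * (S₂ * S₁))).trace.re := by
        rw [star_mul, hS₁.star_eq, hS₂.star_eq]
        simp only [mul_assoc]

theorem exists_conj_le_and_re_trace_eq_fidelity {ρ₁ ρ₂ : Matrix n n ℂ} (hρ₁ : ρ₁.PosSemidef)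
    (hρ₂ : ρ₂.PosSemidef) :
    ∃ X : Matrix n n ℂ, X * ρ₁ * Xᴴ ≤ ρ₂ ∧ (X * ρ₁).trace.re = fidelity ρ₁ ρ₂ := by
  rw [fidelity_eq_traceNorm hρ₁ hρ₂, traceNorm_eq_re_trace_abs]
  have hB₁ : (CFC.sqrt ρ₁).IsHermitian := (CFC.sqrt_nonneg ρ₁).posSemidef.1
  have hB₂ : IsSelfAdjoint (CFC.sqrt ρ₂) := IsSelfAdjoint.of_nonneg (CFC.sqrt_nonneg ρ₂)
  have hB₁B₁ := CFC.sqrt_mul_sqrt_self ρ₁ hρ₁.nonneg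
  have hB₂B₂ := CFC.sqrt_mul_sqrt_self ρ₂ hρ₂.nonneg
  generalize CFC.sqrt ρ₁ = B₁ at *
  generalize CFC.sqrt ρ₂ = B₂ at *
  subst hB₁B₁ hB₂B₂
  obtain ⟨U, -, hUT, hU, -⟩ := exists_polar (B₁ * B₂)
  set B₁' := hermitianPinv B₁
  have hB₁' : star B₁' = B₁' := (isHermitian_hermitianPinv B₁).isSelfAdjoint.star_eq
  refine ⟨B₂ * star U * B₁', ?_, ?_⟩
  · calc B₂ * star U * B₁' * (B₁ * B₁) * (B₂ * star U * B₁')ᴴ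
        = B₂ * (star U * (B₁' * (B₁ * B₁) * B₁') * U) * B₂ := by
          simp only [← star_eq_conjTranspose, star_mul, star_star, hB₂.star_eq,
            hB₁', mul_assoc]
      _ ≤ B₂ * (star U * 1 * U) * B₂ := hB₂.conjugate_le_conjugate
          (star_left_conjugate_le_conjugate (hermitianPinv_mul_sq_mul_hermitianPinv_le_one hB₁) U)
      _ ≤ B₂ * 1 * B₂ := hB₂.conjugate_le_conjugate (by rwa [mul_one])
      _ = B₂ * B₂ := by rw [mul_one]
  · rw [mul_assoc, ← mul_assoc B₁', hermitianPinv_mul_comm hB₁, mul_hermitianPinv_mul_self hB₁,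
      ← hUT, star_eq_conjTranspose, mul_assoc, trace_mul_comm, mul_assoc]

end Fidelity

section Marginals

variable {n m : Type*} [Fintype n] [Fintype m] [DecidableEq m]

theorem fidelity_le_fidelity_ptraceRight [DecidableEq n] {σ₁ σ₂ : Matrix (n × m) (n × m) ℂ}
    (hσ₁ : σ₁.PosSemidef) (hσ₂ : σ₂.PosSemidef) :
    fidelity σ₁ σ₂ ≤ fidelity (ptraceRight σ₁) (ptraceRight σ₂) := by
  rw [fidelity_eq_traceNorm hσ₁ hσ₂, traceNorm_eq_re_trace_abs]
  have hS₁ : (CFC.sqrt σ₁).IsHermitian := (CFC.sqrt_nonneg σ₁).posSemidef.1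
  have hS₂ : (CFC.sqrt σ₂).IsHermitian := (CFC.sqrt_nonneg σ₂).posSemidef.1
  have hS₁S₁ := CFC.sqrt_mul_sqrt_self σ₁ hσ₁.nonneg
  have hS₂S₂ := CFC.sqrt_mul_sqrt_self σ₂ hσ₂.nonneg
  generalize CFC.sqrt σ₁ = S₁ at *
  generalize CFC.sqrt σ₂ = S₂ at *
  subst hS₁S₁ hS₂S₂
  obtain ⟨V, -, hVT, -, hV⟩ := exists_polar (S₁ * S₂)
  -- `‖S₁ S₂‖₁ = tr (Vᴴ S₁ S₂)` is the trace of the partial trace of `S₂ (Vᴴ S₁)`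
  have hG : S₂ * (Vᴴ * S₁) = S₂ᴴ * (Vᴴ * S₁) := by rw [hS₂.eq]
  rw [← hVT, ← mul_assoc, trace_mul_comm, ← trace_ptraceRight, hG]
  refine re_trace_le_fidelity_of_norm_sq_le (fun a b => ?_) hσ₂.ptraceRight hσ₁.ptraceRight
  have hR : (Vᴴ * S₁)ᴴ * (Vᴴ * S₁) ≤ S₁ * S₁ := by
    calc (Vᴴ * S₁)ᴴ * (Vᴴ * S₁) = star S₁ * (V * Vᴴ) * S₁ := by
          rw [conjTranspose_mul, conjTranspose_conjTranspose, star_eq_conjTranspose]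
          simp only [mul_assoc]
      _ ≤ star S₁ * 1 * S₁ := star_left_conjugate_le_conjugate hV S₁
      _ = S₁ * S₁ := by rw [mul_one, star_eq_conjTranspose, hS₁.eq]
  calc _ ≤ _ := norm_star_dotProduct_ptraceRight_mulVec_sq_le _ _ a b
    _ ≤ _ := by
      rw [hS₂.eq]
      exact mul_le_mul_of_nonneg_left (re_dotProduct_le_of_le (ptraceRight_mono hR) b)
        (hσ₂.ptraceRight.re_dotProduct_nonneg a)

lemma exists_posSemidef_trace_eq_one [Nonempty m] :
    ∃ τ : Matrix m m ℂ, τ.PosSemidef ∧ τ.trace = 1 := by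
  obtain ⟨k⟩ := ‹Nonempty m›
  refine ⟨diagonal (Pi.single k 1), PosSemidef.diagonal (Pi.single_nonneg.mpr zero_le_one), ?_⟩
  simp [trace_diagonal]

theorem exists_ptraceRight_eq_of_conj_le [Nonempty m] {σ : Matrix (n × m) (n × m) ℂ}
    {X ρ : Matrix n n ℂ} (hσ : σ.PosSemidef) (hX : X * ptraceRight σ * Xᴴ ≤ ρ) :
    ∃ σ' : Matrix (n × m) (n × m) ℂ, σ'.PosSemidef ∧ ptraceRight σ' = ρ ∧
      (X ⊗ₖ 1) * σ * (X ⊗ₖ 1)ᴴ ≤ σ' := by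
  obtain ⟨τ, hτ, hτ1⟩ := exists_posSemidef_trace_eq_one (m := m)
  have hΔ := (le_iff.mp hX).kronecker hτ
  refine ⟨(X ⊗ₖ 1) * σ * (X ⊗ₖ 1)ᴴ + (ρ - X * ptraceRight σ * Xᴴ) ⊗ₖ τ,
    (hσ.mul_mul_conjTranspose_same _).add hΔ, ?_, le_add_of_nonneg_right hΔ.nonneg⟩
  rw [ptraceRight_add, ptraceRight_kronecker, hτ1, one_smul, conjTranspose_kronecker,
    conjTranspose_one, mul_assoc, ptraceRight_kronecker_one_mul, ptraceRight_mul_kronecker_one,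
    ← mul_assoc, add_sub_cancel]

end Marginals

theorem stmt5_general {n m : ℕ} (ρ₁ ρ₂ : Matrix (Fin n) (Fin n) ℂ)
    (σ₁ : Matrix (Fin n × Fin m) (Fin n × Fin m) ℂ)
    (hρ₂ : IsDensity ρ₂) (hσ₁ : IsDensity σ₁)
    (hp₁ : ptraceRight σ₁ = ρ₁) :
    ∃ σ₂ : Matrix (Fin n × Fin m) (Fin n × Fin m) ℂ,
      IsDensity σ₂ ∧ ptraceRight σ₂ = ρ₂ ∧ fidelity ρ₁ ρ₂ = fidelity σ₁ σ₂ := by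
  have : Nonempty (Fin m) := by
    by_contra h
    rw [not_nonempty_iff] at h
    simpa [trace] using hσ₁.2
  subst hp₁
  obtain ⟨X, hXle, hXtr⟩ := exists_conj_le_and_re_trace_eq_fidelity hσ₁.1.ptraceRight hρ₂.1
  obtain ⟨σ₂, hσ₂, hpt, hle⟩ := exists_ptraceRight_eq_of_conj_le hσ₁.1 hXle
  refine ⟨σ₂, ⟨hσ₂, by rw [← trace_ptraceRight, hpt, hρ₂.2]⟩, hpt, le_antisymm ?_ ?_⟩
  · calc fidelity (ptraceRight σ₁) ρ₂ = ((X ⊗ₖ 1) * σ₁).trace.re := by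
          rw [← hXtr, ← trace_ptraceRight, ptraceRight_kronecker_one_mul]
      _ ≤ fidelity σ₁ σ₂ := re_trace_mul_le_fidelity hσ₁.1 hle
  · simpa only [hpt] using fidelity_le_fidelity_ptraceRight hσ₁.1 hσ₂

/-- Fidelity-preserving extension: given densities `ρ₁, ρ₂` and an extension `σ₁`
of `ρ₁`, there is an extension `σ₂` of `ρ₂` with `F(ρ₁,ρ₂) = F(σ₁,σ₂)`. -/
theorem stmt5 {n m : ℕ} (ρ₁ ρ₂ : Matrix (Fin n) (Fin n) ℂ)
    (σ₁ : Matrix (Fin n × Fin m) (Fin n × Fin m) ℂ)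
    (hρ₁ : IsDensity ρ₁) (hρ₂ : IsDensity ρ₂) (hσ₁ : IsDensity σ₁)
    (hp₁ : ptraceRight σ₁ = ρ₁) :
    ∃ σ₂ : Matrix (Fin n × Fin m) (Fin n × Fin m) ℂ,
      IsDensity σ₂ ∧ ptraceRight σ₂ = ρ₂ ∧ fidelity ρ₁ ρ₂ = fidelity σ₁ σ₂ :=
  stmt5_general ρ₁ ρ₂ σ₁ hρ₂ hσ₁ hp₁
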